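/- Dichotomy for the smoothed perceptron loss: let l : ℝ → ℝ be defined by l(t) = −(4t+1)·exp(−2) for t ≤ −1/2, l(t) = exp(1/t) for −1/2 ≤ t < 0, and l(t) = 0 for t ≥ 0, with derivative l'. Let w ∈ ℝ^d and for a finitely supported probability measure ν on ℝ^d write g(ν) = E_{x∼ν}[l'(⟨w,x⟩)·x]. Then for every finitely supported probability measure μ on ℝ^d: (i) c := ⟨w, g(μ)⟩ ≥ 0; and (ii) if c > 0, then for every λ ∈ [0,1) and every finitely supported probability measure ν on ℝ^d, (1−λ)·g(μ) + λ·g(ν) ≠ 0 (poisoning fails at any ratio λ < 1). -/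
import Mathlib


open scoped RealInnerProductSpace BigOperators

/-- A finitely supported probability measure, represented as a finitely supported
weight function which is nonnegative and sums to 1. -/
def IsFinProb {Z : Type*} (p : Z →₀ ℝ) : Prop :=
  (∀ z, 0 ≤ p z) ∧ p.sum (fun _ w => w) = 1

/-- Expectation `E_{z ∼ p}[g z]` of a vector-valued map under a finitely supported measure. -/
noncomputable def expect {Z E : Type*} [AddCommMonoid E] [Module ℝ E]
    (p : Z →₀ ℝ) (g : Z → E) : E :=
  p.sum fun z w => w • g z

/-- The dichotomy loss: a smoothed version of the perceptron loss `max{−t, 0}`. -/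
noncomputable def dich (t : ℝ) : ℝ :=
  if t ≤ -(1/2 : ℝ) then -(4 * t + 1) * Real.exp (-2)
  else if t < 0 then Real.exp (1 / t)
  else 0

/-- Pointwise gradient `l'(⟨w,x⟩)·x` of the margin loss `ℓ(x; w) = dich(⟨w,x⟩)`. -/
noncomputable def gdich {d : ℕ} (w x : EuclideanSpace ℝ (Fin d)) :
    EuclideanSpace ℝ (Fin d) :=
  deriv dich ⟪w, x⟫ • x

open Set


lemma lin_hasDeriv (t : ℝ) :
    HasDerivAt (fun s : ℝ => -(4 * s + 1) * Real.exp (-2)) (-4 * Real.exp (-2)) t := by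
  have h : HasDerivAt (fun s : ℝ => -(4 * s + 1) * Real.exp (-2)) ((-(4*1)) * Real.exp (-2)) t :=
    ((((hasDerivAt_id t).const_mul 4).add_const 1).neg).mul_const _
  simpa using h

lemma exp_inv_hasDeriv {t : ℝ} (ht : t ≠ 0) :
    HasDerivAt (fun s : ℝ => Real.exp (1 / s)) (Real.exp (1/t) * (-(t^2)⁻¹)) t := by
  have h : HasDerivAt (fun s : ℝ => Real.exp s⁻¹) (Real.exp t⁻¹ * (-(t^2)⁻¹)) t :=
    (hasDerivAt_inv ht).exp
  simpa [one_div] using h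

lemma deriv_dich_nonpos_neg {t : ℝ} (ht : t < 0) : deriv dich t ≤ 0 := by
  rcases lt_trichotomy t (-(1/2:ℝ)) with h | h | h
  · have hev : dich =ᶠ[nhds t] (fun s => -(4 * s + 1) * Real.exp (-2)) := by
      filter_upwards [Iio_mem_nhds h] with s hs
      simp only [dich, if_pos (le_of_lt (mem_Iio.mp hs))]
    rw [Filter.EventuallyEq.deriv_eq hev, (lin_hasDeriv t).deriv]
    have := Real.exp_pos (-2 : ℝ)
    nlinarith
  · -- gluing point
    subst h
    have hL : HasDerivWithinAt dich (-4 * Real.exp (-2)) (Iic (-(1/2:ℝ))) (-(1/2:ℝ)) := by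
      refine ((lin_hasDeriv _).hasDerivWithinAt).congr ?_ ?_
      · intro s hs
        simp only [dich, if_pos (mem_Iic.mp hs)]
      · simp [dich]
    have hR : HasDerivWithinAt dich (-4 * Real.exp (-2)) (Ici (-(1/2:ℝ))) (-(1/2:ℝ)) := by
      have hne : (-(1/2:ℝ)) ≠ 0 := by norm_num
      have hval : Real.exp (1/(-(1/2:ℝ))) * (-(((-(1/2:ℝ)))^2)⁻¹) = -4 * Real.exp (-2) := by
        norm_num
        ring
      have h1 : HasDerivWithinAt (fun s : ℝ => Real.exp (1/s)) (-4 * Real.exp (-2))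
          (Ico (-(1/2:ℝ)) 0) (-(1/2:ℝ)) := by
        have := (exp_inv_hasDeriv hne).hasDerivWithinAt (s := Ico (-(1/2:ℝ)) 0)
        rwa [hval] at this
      have h2 : HasDerivWithinAt dich (-4 * Real.exp (-2)) (Ico (-(1/2:ℝ)) 0) (-(1/2:ℝ)) := by
        refine h1.congr ?_ ?_
        · intro s hs
          rcases eq_or_lt_of_le hs.1 with he | hl
          · simp only [dich, if_pos (le_of_eq he.symm), ← he]
            norm_num
          · simp only [dich, if_neg (not_le.mpr hl), if_pos hs.2]
        · simp [dich]
          norm_num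
      have hmem : Ico (-(1/2:ℝ)) 0 ∈ nhdsWithin (-(1/2:ℝ)) (Ici (-(1/2:ℝ))) := by
        rw [← Ici_inter_Iio]
        exact Filter.inter_mem self_mem_nhdsWithin
          (mem_nhdsWithin_of_mem_nhds (Iio_mem_nhds (by norm_num)))
      exact h2.mono_of_mem_nhdsWithin hmem
    have hD : HasDerivAt dich (-4 * Real.exp (-2)) (-(1/2:ℝ)) := by
      have := hL.union hR
      rwa [Iic_union_Ici, hasDerivWithinAt_univ] at this
    rw [hD.deriv]
    have := Real.exp_pos (-2 : ℝ); nlinarith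
  · have hev : dich =ᶠ[nhds t] (fun s => Real.exp (1 / s)) := by
      filter_upwards [Ioo_mem_nhds h ht] with s hs
      simp only [dich, if_neg (not_le.mpr hs.1), if_pos hs.2]
    rw [Filter.EventuallyEq.deriv_eq hev, (exp_inv_hasDeriv ht.ne).deriv]
    have h1 := Real.exp_pos (1/t)
    have h2 : (0:ℝ) < t^2 := by nlinarith
    have h3 : (0:ℝ) < (t^2)⁻¹ := inv_pos.mpr h2
    nlinarith

lemma mul_deriv_dich_nonneg (t : ℝ) : 0 ≤ t * deriv dich t := by
  rcases lt_trichotomy t 0 with h | h | h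
  · have := deriv_dich_nonpos_neg h
    nlinarith
  · simp [h]
  · have hev : dich =ᶠ[nhds t] (fun _ => (0:ℝ)) := by
      filter_upwards [Ioi_mem_nhds h] with s hs
      have h1 : ¬ s ≤ -(1/2:ℝ) := by simp at hs ⊢; linarith
      have h2 : ¬ s < 0 := not_lt.mpr (le_of_lt hs)
      simp only [dich, if_neg h1, if_neg h2]
    rw [Filter.EventuallyEq.deriv_eq hev, deriv_const]
    simp

lemma inner_expect_nonneg {d : ℕ} (w : EuclideanSpace ℝ (Fin d))
    (p : EuclideanSpace ℝ (Fin d) →₀ ℝ) (hp : IsFinProb p) :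
    0 ≤ ⟪w, expect p (gdich w)⟫ := by
  rw [expect, Finsupp.sum, inner_sum]
  refine Finset.sum_nonneg fun x _ => ?_
  rw [gdich, real_inner_smul_right, real_inner_smul_right]
  exact mul_nonneg (hp.1 x) (by simpa [mul_comm] using mul_deriv_dich_nonneg ⟪w, x⟫)

/-- dichotomy for the smoothed perceptron loss: (i) `c = ⟨w, g(μ)⟩ ≥ 0`
for every finitely supported probability measure μ; (ii) if `c > 0` then for every
`λ ∈ [0,1)` and every finitely supported probability measure ν the mixed gradient
does not vanish (poisoning fails at any ratio `λ < 1`). -/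
theorem stmt16 {d : ℕ} (w : EuclideanSpace ℝ (Fin d))
    (μ : EuclideanSpace ℝ (Fin d) →₀ ℝ) (hμ : IsFinProb μ) :
    0 ≤ ⟪w, expect μ (gdich w)⟫ ∧
    (0 < ⟪w, expect μ (gdich w)⟫ →
      ∀ lam : ℝ, 0 ≤ lam → lam < 1 →
        ∀ ν : EuclideanSpace ℝ (Fin d) →₀ ℝ, IsFinProb ν →
          (1 - lam) • expect μ (gdich w) + lam • expect ν (gdich w) ≠ 0) := by
  refine ⟨inner_expect_nonneg w μ hμ, ?_⟩
  intro hc lam hlam0 hlam1 ν hν heq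
  have hν' := inner_expect_nonneg w ν hν
  have h0 : ⟪w, (1 - lam) • expect μ (gdich w) + lam • expect ν (gdich w)⟫ = 0 := by
    rw [heq, inner_zero_right]
  rw [inner_add_right, real_inner_smul_right, real_inner_smul_right] at h0
  nlinarith
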